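/- Let ψ ∈ ℂ⁸ be the three-qubit state with computational-basis coordinates (ordered |000⟩,…,|111⟩) equal to (1/2)·(1, (1+i)/2, (1+i)/2, (1−i)/2, (1+i)/2, (1−i)/2, (1−i)/2, 0). Then the squared pairwise concurrences of ψ are all equal: C²_{AB}(ψ) = C²_{AC}(ψ) = C²_{BC}(ψ) = (13 − √65)/32. -/

import Mathlib

open Matrix Complex Kronecker

noncomputable section

def Y2 : Matrix (Fin 2) (Fin 2) ℂ := !![0, -Complex.I; Complex.I, 0]

/-- Binary index `(i,j,k) ↦ 4i + 2j + k`. -/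
def idx3 (p : Fin 2 × Fin 2 × Fin 2) : Fin 8 :=
  ⟨4 * p.1.val + 2 * p.2.1.val + p.2.2.val, by
    have := p.1.isLt; have := p.2.1.isLt; have := p.2.2.isLt; omega⟩

/-- The state `(1/2)(1, (1+i)/2, (1+i)/2, (1−i)/2, (1+i)/2, (1−i)/2, (1−i)/2, 0)` on
qubits `A, B, C`. -/
def ψ13 : Fin 2 × Fin 2 × Fin 2 → ℂ := fun p => (1 / 2 : ℂ) *
  (![1, (1 + I) / 2, (1 + I) / 2, (1 - I) / 2,
     (1 + I) / 2, (1 - I) / 2, (1 - I) / 2, 0] : Fin 8 → ℂ) (idx3 p)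

/-- `ρ_AB = Tr_C |ψ⟩⟨ψ|`. -/
def ρAB : Matrix (Fin 2 × Fin 2) (Fin 2 × Fin 2) ℂ := fun p q =>
  ∑ z : Fin 2, ψ13 (p.1, p.2, z) * star (ψ13 (q.1, q.2, z))

/-- `ρ_AC = Tr_B |ψ⟩⟨ψ|`. -/
def ρAC : Matrix (Fin 2 × Fin 2) (Fin 2 × Fin 2) ℂ := fun p q =>
  ∑ y : Fin 2, ψ13 (p.1, y, p.2) * star (ψ13 (q.1, y, q.2))

/-- `ρ_BC = Tr_A |ψ⟩⟨ψ|`. -/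
def ρBC : Matrix (Fin 2 × Fin 2) (Fin 2 × Fin 2) ℂ := fun p q =>
  ∑ x : Fin 2, ψ13 (x, p.1, p.2) * star (ψ13 (x, q.1, q.2))

/-- The spin-flipped matrix `ρ̃ = (Y⊗Y) ρ̄ (Y⊗Y)`. -/
def spinFlip (ρ : Matrix (Fin 2 × Fin 2) (Fin 2 × Fin 2) ℂ) :
    Matrix (Fin 2 × Fin 2) (Fin 2 × Fin 2) ℂ :=
  (Y2 ⊗ₖ Y2) * ρ.map (starRingEnd ℂ) * (Y2 ⊗ₖ Y2)

/-- "The squared concurrence of the two-qubit density matrix `ρ` is `c`": there are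
nonnegative reals `λ₁ ≥ λ₂ ≥ λ₃ ≥ λ₄` which are the eigenvalues of `ρρ̃` (stated via
the characteristic polynomial) with `max(0, √λ₁ − √λ₂ − √λ₃ − √λ₄)² = c`. -/
def concurrenceSqIs (ρ : Matrix (Fin 2 × Fin 2) (Fin 2 × Fin 2) ℂ) (c : ℝ) : Prop :=
  ∃ lam : Fin 4 → ℝ, Antitone lam ∧ (∀ i, 0 ≤ lam i) ∧
    (ρ * spinFlip ρ).charpoly =
      ∏ i : Fin 4, (Polynomial.X - Polynomial.C ((lam i : ℝ) : ℂ)) ∧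
    (max 0 (Real.sqrt (lam 0) - Real.sqrt (lam 1) - Real.sqrt (lam 2) -
      Real.sqrt (lam 3))) ^ 2 = c


/-!
The state is invariant under every permutation of the qubits, so the three reduced matrices
coincide. Writing `ρ_AB = V Vᴴ`, where `V` is the `4 × 2` matrix of amplitudes with rows indexed
by `AB` and columns by `C`, the matrix `ρ ρ̃ = V (Vᴴ Σ V̄ Vᵀ Σ)` (with `Σ = Y ⊗ Y`) has the
nonzero spectrum of `T̄ T`, where `T = Vᵀ Σ V` is a symmetric `2 × 2` matrix. Here
`tr (T̄ T) = 13/32` and `det (T̄ T) = |det T|² = 65/4096`, so the two nonzero eigenvalues `λ₁, λ₂`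
satisfy `C² = (√λ₁ - √λ₂)² = λ₁ + λ₂ - 2 √(λ₁ λ₂) = 13/32 - 2 √65/64`.
-/

open Polynomial

lemma sq_sqrt_sub_sqrt {a b : ℝ} (ha : 0 ≤ a) (hb : 0 ≤ b) :
    (√a - √b) ^ 2 = a + b - 2 * √(a * b) := by
  rw [sub_sq, Real.sq_sqrt ha, Real.sq_sqrt hb, Real.sqrt_mul ha]
  ring

lemma concurrenceSqIs_of_charpoly_eq (ρ : Matrix (Fin 2 × Fin 2) (Fin 2 × Fin 2) ℂ) {s p : ℝ}
    (hp : 0 ≤ p) (hps : 4 * p ≤ s ^ 2) (hs : 0 ≤ s)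
    (h : (ρ * spinFlip ρ).charpoly = X ^ 2 * (X ^ 2 - C (s : ℂ) * X + C (p : ℂ))) :
    concurrenceSqIs ρ (s - 2 * √p) := by
  set d := √(s ^ 2 - 4 * p)
  have hd : 0 ≤ d := Real.sqrt_nonneg _
  have hd2 : d ^ 2 = s ^ 2 - 4 * p := Real.sq_sqrt (by linarith)
  have hds : d ≤ s := by nlinarith
  have hsum : (s + d) / 2 + (s - d) / 2 = s := by ring
  have hprod : (s + d) / 2 * ((s - d) / 2) = p := by nlinarith
  have hle : (s - d) / 2 ≤ (s + d) / 2 := by linarith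
  have hnonneg : 0 ≤ (s - d) / 2 := by linarith
  refine ⟨![(s + d) / 2, (s - d) / 2, 0, 0], ?_, ?_, ?_, ?_⟩
  · simp [antitone_vecCons, hle, hnonneg]
  · intro i
    fin_cases i <;> simp [hnonneg, hnonneg.trans hle]
  · rw [h, Fin.prod_univ_four]
    simp only [cons_val_zero, cons_val_one, cons_val_two, cons_val_three, head_cons, tail_cons,
      Complex.ofReal_zero, map_zero, sub_zero]
    have hsumC : C (((s + d) / 2 : ℝ) : ℂ) + C (((s - d) / 2 : ℝ) : ℂ) = C (s : ℂ) := by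
      rw [← map_add, ← Complex.ofReal_add, hsum]
    have hprodC : C (((s + d) / 2 : ℝ) : ℂ) * C (((s - d) / 2 : ℝ) : ℂ) = C (p : ℂ) := by
      rw [← map_mul, ← Complex.ofReal_mul, hprod]
    linear_combination (X ^ 3 : ℂ[X]) * hsumC - X ^ 2 * hprodC
  · simp only [cons_val_zero, cons_val_one, cons_val_two, cons_val_three, head_cons, tail_cons,
      Real.sqrt_zero, sub_zero]
    rw [max_eq_right (sub_nonneg.2 (Real.sqrt_le_sqrt hle)),
      sq_sqrt_sub_sqrt (hnonneg.trans hle) hnonneg, hsum, hprod]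

lemma Y2_map_conj : Y2.map (starRingEnd ℂ) = -Y2 := by
  ext i j
  fin_cases i <;> fin_cases j <;> simp [Y2]

lemma Y2_kronecker_Y2_map_conj : (Y2 ⊗ₖ Y2).map (starRingEnd ℂ) = Y2 ⊗ₖ Y2 := by
  ext i j
  have hY (a c : Fin 2) : starRingEnd ℂ (Y2 a c) = -Y2 a c := congrFun (congrFun Y2_map_conj a) c
  simp only [map_apply, kroneckerMap_apply, map_mul, hY, neg_mul_neg]

def spinFlipGram {k : Type*} [Fintype k] (V : Matrix (Fin 2 × Fin 2) k ℂ) : Matrix k k ℂ :=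
  Vᵀ * (Y2 ⊗ₖ Y2) * V

lemma charpoly_mul_spinFlip_mul_conjTranspose {k : Type*} [Fintype k] [DecidableEq k]
    (V : Matrix (Fin 2 × Fin 2) k ℂ) (hk : Fintype.card k ≤ 4) :
    (V * Vᴴ * spinFlip (V * Vᴴ)).charpoly =
      X ^ (4 - Fintype.card k) *
        ((spinFlipGram V).map (starRingEnd ℂ) * spinFlipGram V).charpoly := by
  have hconj : (V * Vᴴ).map (starRingEnd ℂ) = V.map (starRingEnd ℂ) * Vᵀ := by
    rw [Matrix.map_mul]
    congr 1
    ext i j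
    simp
  have hgram : (spinFlipGram V).map (starRingEnd ℂ) =
      Vᴴ * (Y2 ⊗ₖ Y2) * V.map (starRingEnd ℂ) := by
    rw [spinFlipGram, Matrix.map_mul, Matrix.map_mul, Y2_kronecker_Y2_map_conj]
    rfl
  rw [spinFlip, hconj, hgram, spinFlipGram]
  simp only [Matrix.mul_assoc]
  rw [charpoly_mul_comm_of_le _ _ (by simpa using hk)]
  simp only [Matrix.mul_assoc, Fintype.card_prod, Fintype.card_fin]

lemma ψ13_swap_left (x y z : Fin 2) : ψ13 (x, y, z) = ψ13 (y, x, z) := by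
  fin_cases x <;> fin_cases y <;> fin_cases z <;> rfl

lemma ψ13_swap_right (x y z : Fin 2) : ψ13 (x, y, z) = ψ13 (x, z, y) := by
  fin_cases x <;> fin_cases y <;> fin_cases z <;> rfl

lemma ρAC_eq_ρAB : ρAC = ρAB := by
  ext p q
  simp only [ρAC, ρAB, ψ13_swap_right p.1, ψ13_swap_right q.1]

lemma ρBC_eq_ρAB : ρBC = ρAB := by
  ext p q
  simp only [ρBC, ρAB, ψ13_swap_left _ p.1, ψ13_swap_left _ q.1, ψ13_swap_right p.1,
    ψ13_swap_right q.1]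

def ψ13Mat : Matrix (Fin 2 × Fin 2) (Fin 2) ℂ := Matrix.of fun p z => ψ13 (p.1, p.2, z)

lemma ρAB_eq_mul_conjTranspose : ρAB = ψ13Mat * ψ13Matᴴ := rfl

lemma spinFlipGram_ψ13Mat :
    spinFlipGram ψ13Mat = !![(-1 + 2 * I) / 4, 1 / 8; 1 / 8, -I / 4] := by
  ext i j
  fin_cases i <;> fin_cases j <;>
    simp [spinFlipGram, ψ13Mat, ψ13, idx3, Y2, mul_apply, Fintype.sum_prod_type,
      Fin.sum_univ_two] <;>
    ring_nf <;> norm_num [Complex.ext_iff]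

lemma charpoly_ρAB_mul_spinFlip :
    (ρAB * spinFlip ρAB).charpoly =
      X ^ 2 * (X ^ 2 - C ((13 / 32 : ℝ) : ℂ) * X + C ((65 / 4096 : ℝ) : ℂ)) := by
  set T : Matrix (Fin 2) (Fin 2) ℂ := !![(-1 + 2 * I) / 4, 1 / 8; 1 / 8, -I / 4]
  have htrace : (T.map (starRingEnd ℂ) * T).trace = 13 / 32 := by
    simp [T, trace_fin_two, mul_apply, Fin.sum_univ_two, map_ofNat]
    ring_nf
    norm_num [Complex.ext_iff]
  have hdet : (T.map (starRingEnd ℂ) * T).det = 65 / 4096 := by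
    simp [T, det_fin_two, map_ofNat]
    ring_nf
    norm_num [Complex.ext_iff]
  rw [ρAB_eq_mul_conjTranspose, charpoly_mul_spinFlip_mul_conjTranspose _ (by simp),
    spinFlipGram_ψ13Mat, charpoly_fin_two, htrace, hdet, Fintype.card_fin]
  push_cast
  ring

/-- All squared pairwise concurrences of `ψ13` equal `(13 − √65)/32`. -/
theorem EJM_fiducial_pairwise_concurrences :
    concurrenceSqIs ρAB ((13 - Real.sqrt 65) / 32) ∧
    concurrenceSqIs ρAC ((13 - Real.sqrt 65) / 32) ∧
    concurrenceSqIs ρBC ((13 - Real.sqrt 65) / 32) := by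
  have hsqrt : √(65 / 4096 : ℝ) = √65 / 64 := by
    rw [Real.sqrt_div' _ (by norm_num), show (4096 : ℝ) = 64 ^ 2 by norm_num,
      Real.sqrt_sq (by norm_num)]
  have hAB : concurrenceSqIs ρAB ((13 - √65) / 32) := by
    have h := concurrenceSqIs_of_charpoly_eq ρAB (by norm_num) (by norm_num) (by norm_num)
      charpoly_ρAB_mul_spinFlip
    rwa [hsqrt, show (13 / 32 : ℝ) - 2 * (√65 / 64) = (13 - √65) / 32 by ring] at h
  rw [ρAC_eq_ρAB, ρBC_eq_ρAB]
  exact ⟨hAB, hAB, hAB⟩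

end
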